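/- d-equivalence of contexts is preserved by saturation: let dget(load(·),·) assign to each URI u and each anchor name f either a schema or ⊥, let fstURI(C,f) be the first URI u of the list C with dget(load(u),f) ≠ ⊥ (and ⊥ if there is none), and for a set d of anchor names write C ≡_d C' when fstURI(C,f) = fstURI(C',f) for every f ∈ d. Then for all lists of URIs C and C', every URI u, and every set d of anchor names: C ≡_d C' implies (C +? u) ≡_d (C' +? u). -/

import Mathlib

/-!
Formalization of the minimal fragment of Modern JSON Schema (Draft 2020-12)
following Attouche, Baazizi, Colazzo, Ghelli, Sartiani, Scherzinger,
"Validation of Modern JSON Schema: Formalization and Complexity".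
-/

namespace MJS

/-- JSON types. -/
inductive JTy : Type
  | null | boolean | number | string | array | object
  deriving DecidableEq

/-- JSON values: base values, arrays and objects (objects are supposed to have
pairwise distinct member names). -/
inductive JVal : Type
  | null : JVal
  | bool : Bool → JVal
  | num : ℚ → JVal
  | str : String → JVal
  | arr : List JVal → JVal
  | obj : List (String × JVal) → JVal

def typeOf : JVal → JTy
  | .null => .null
  | .bool _ => .boolean
  | .num _ => .number
  | .str _ => .string
  | .arr _ => .array
  | .obj _ => .object

-- Schemas of the minimal fragment: `true`, `false`, or an object of keywords.
mutual
  inductive Schema : Type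
    | tru : Schema
    | fls : Schema
    | obj : List Keyword → Schema

  inductive Keyword : Type
    | type : JTy → Keyword
    | minimum : ℚ → Keyword
    | pattern : String → Keyword
    | properties : List (String × Schema) → Keyword
    | patternProperties : List (String × Schema) → Keyword
    | anyOf : List Schema → Keyword
    | allOf : List Schema → Keyword
    | oneOf : List Schema → Keyword
    | not : Schema → Keyword
    | ref : String → String → Keyword
    | dynamicRef : String → String → Keyword
    | anchor : String → Keyword
    | dynamicAnchor : String → Keyword
    | id : String → Keyword
    | defs : List (String × Schema) → Keyword
    | additionalProperties : Schema → Keyword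
    | items : Schema → Keyword
    | unevaluatedProperties : Schema → Keyword
    | unevaluatedItems : Schema → Keyword
end

/-- Annotations: evaluated object member names, or evaluated array positions (1-based). -/
abbrev Ann := String ⊕ ℕ

/-- A context is a list of absolute URIs (without repetitions). -/
abbrev Ctx := List String

/-- Saturation `C +? u`. -/
def saturate (C : Ctx) (u : String) : Ctx := if u ∈ C then C else C ++ [u]

/-- The environment of a closed schema: `load` maps each absolute URI to its
resource, `get R f` returns the subschema of `R` named by the (static or
dynamic) anchor `f`, `dget R f` returns the subschema of `R` carrying
`$dynamicAnchor : f` (`none` if there is none), and `lang p s` tells whether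
the string `s` belongs to the language of the pattern `p`. -/
structure Env where
  load : String → Schema
  get : Schema → String → Option Schema
  dget : Schema → String → Option Schema
  lang : String → String → Bool

/-- `fstURI C f`: the first URI `u` of the list `C` with `dget (load u) f ≠ ⊥`. -/
def fstURI (E : Env) (C : Ctx) (f : String) : Option String :=
  C.find? fun u => (E.dget (E.load u) f).isSome

def Schema.keywords : Schema → List Keyword
  | .obj ks => ks
  | _ => []

/-- The four annotation-dependent keywords. -/
def Keyword.isDependent : Keyword → Bool
  | .additionalProperties _ => true
  | .items _ => true
  | .unevaluatedProperties _ => true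
  | .unevaluatedItems _ => true
  | _ => false

/-- `propsOf`: a member name `k` is directly matched by an adjacent
`properties`/`patternProperties` keyword of the list `Ks`. -/
def keyMatchedB (E : Env) (Ks : List Keyword) (k : String) : Bool :=
  Ks.any fun K =>
    match K with
    | .properties kvs => kvs.any fun kv => kv.1 == k
    | .patternProperties kvs => kvs.any fun kv => E.lang kv.1 k
    | _ => false

def objNames (members : List (String × JVal)) : Finset Ann :=
  (members.map fun m => (Sum.inl m.1 : Ann)).toFinset

def arrPositions (n : ℕ) : Finset Ann :=
  (Finset.range n).image fun i => (Sum.inr (i + 1) : Ann)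

def listUnion (l : List (Finset Ann)) : Finset Ann := l.foldr (· ∪ ·) ∅

/-- The pairs (member value, subschema) matched by a `properties` keyword. -/
def matchedPairs (members : List (String × JVal)) (kvs : List (String × Schema)) :
    List (JVal × Schema) :=
  members.flatMap fun m => kvs.filterMap fun kv =>
    if m.1 = kv.1 then some (m.2, kv.2) else none

def matchedNames (members : List (String × JVal)) (kvs : List (String × Schema)) :
    Finset Ann :=
  ((members.filter fun m => kvs.any fun kv => kv.1 == m.1).map
    fun m => (Sum.inl m.1 : Ann)).toFinset

/-- The pairs (member value, subschema) matched by a `patternProperties` keyword. -/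
def patMatchedPairs (E : Env) (members : List (String × JVal))
    (kvs : List (String × Schema)) : List (JVal × Schema) :=
  members.flatMap fun m => kvs.filterMap fun kv =>
    if E.lang kv.1 m.1 then some (m.2, kv.2) else none

def patMatchedNames (E : Env) (members : List (String × JVal))
    (kvs : List (String × Schema)) : Finset Ann :=
  ((members.filter fun m => kvs.any fun kv => E.lang kv.1 m.1).map
    fun m => (Sum.inl m.1 : Ann)).toFinset

/-- Object members whose name is matched by no adjacent
`properties`/`patternProperties` keyword (used by `additionalProperties`). -/
def unmatchedMembers (E : Env) (Ks : List Keyword) (members : List (String × JVal)) :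
    List (String × JVal) :=
  members.filter fun m => !(keyMatchedB E Ks m.1)

/-- Array items whose (1-based) position is not among the accumulated annotations
(used by `unevaluatedItems`). -/
def unevalIdx (is : List JVal) (κ : Finset Ann) : List JVal :=
  ((is.zipIdx.map Prod.swap).filter fun p => !(decide ((Sum.inr (p.1 + 1) : Ann) ∈ κ))).map (·.2)

/-- Object members whose name is not among the accumulated annotations
(used by `unevaluatedProperties`). -/
def unevalMembers (members : List (String × JVal)) (κ : Finset Ann) :
    List (String × JVal) :=
  members.filter fun m => !(decide ((Sum.inl m.1 : Ann) ∈ κ))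

mutual
  /-- The schema judgment `C, J ⊢S S → (r, κ)`. -/
  inductive SJudg (E : Env) : Ctx → JVal → Schema → Bool → Finset Ann → Prop
    | tru {C J} : SJudg E C J .tru true ∅
    | fls {C J} : SJudg E C J .fls false ∅
    | objT {C J Ks κ} : LJudg E C J Ks true κ → SJudg E C J (.obj Ks) true κ
    | objF {C J Ks κ} : LJudg E C J Ks false κ → SJudg E C J (.obj Ks) false ∅

  /-- The keyword judgment `C, J ⊢K K → (r, κ)`. -/
  inductive KJudg (E : Env) : Ctx → JVal → Keyword → Bool → Finset Ann → Prop
    | type {C J t} : KJudg E C J (.type t) (typeOf J == t) ∅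
    | minimumTriv {C J q} : typeOf J ≠ .number → KJudg E C J (.minimum q) true ∅
    | minimum {C d q} : KJudg E C (.num d) (.minimum q) (decide (q ≤ d)) ∅
    | patternTriv {C J p} : typeOf J ≠ .string → KJudg E C J (.pattern p) true ∅
    | pattern {C s p} : KJudg E C (.str s) (.pattern p) (E.lang p s) ∅
    | anchor {C J a} : KJudg E C J (.anchor a) true ∅
    | dynamicAnchor {C J a} : KJudg E C J (.dynamicAnchor a) true ∅
    | id {C J u} : KJudg E C J (.id u) true ∅
    | defs {C J kvs} : KJudg E C J (.defs kvs) true ∅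
    | anyOf {C J l} (rs : List (Bool × Finset Ann)) :
        rs.length = l.length →
        (∀ i (h1 : i < l.length) (h2 : i < rs.length),
          SJudg E C J (l.get ⟨i, h1⟩) (rs.get ⟨i, h2⟩).1 (rs.get ⟨i, h2⟩).2) →
        KJudg E C J (.anyOf l) (rs.any (·.1)) (listUnion (rs.map (·.2)))
    | allOf {C J l} (rs : List (Bool × Finset Ann)) :
        rs.length = l.length →
        (∀ i (h1 : i < l.length) (h2 : i < rs.length),
          SJudg E C J (l.get ⟨i, h1⟩) (rs.get ⟨i, h2⟩).1 (rs.get ⟨i, h2⟩).2) →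
        KJudg E C J (.allOf l) (rs.all (·.1)) (listUnion (rs.map (·.2)))
    | oneOf {C J l} (rs : List (Bool × Finset Ann)) :
        rs.length = l.length →
        (∀ i (h1 : i < l.length) (h2 : i < rs.length),
          SJudg E C J (l.get ⟨i, h1⟩) (rs.get ⟨i, h2⟩).1 (rs.get ⟨i, h2⟩).2) →
        KJudg E C J (.oneOf l) (rs.countP (·.1) == 1) (listUnion (rs.map (·.2)))
    | not {C J S r σ} : SJudg E C J S r σ → KJudg E C J (.not S) (!r) σ
    | propertiesTriv {C J kvs} : typeOf J ≠ .object → KJudg E C J (.properties kvs) true ∅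
    | properties {C members kvs} (rs : List (Bool × Finset Ann)) :
        rs.length = (matchedPairs members kvs).length →
        (∀ i (h1 : i < (matchedPairs members kvs).length) (h2 : i < rs.length),
          SJudg E C ((matchedPairs members kvs).get ⟨i, h1⟩).1
            ((matchedPairs members kvs).get ⟨i, h1⟩).2
            (rs.get ⟨i, h2⟩).1 (rs.get ⟨i, h2⟩).2) →
        KJudg E C (.obj members) (.properties kvs) (rs.all (·.1)) (matchedNames members kvs)
    | patternPropertiesTriv {C J kvs} : typeOf J ≠ .object →
        KJudg E C J (.patternProperties kvs) true ∅
    | patternProperties {C members kvs} (rs : List (Bool × Finset Ann)) :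
        rs.length = (patMatchedPairs E members kvs).length →
        (∀ i (h1 : i < (patMatchedPairs E members kvs).length) (h2 : i < rs.length),
          SJudg E C ((patMatchedPairs E members kvs).get ⟨i, h1⟩).1
            ((patMatchedPairs E members kvs).get ⟨i, h1⟩).2
            (rs.get ⟨i, h2⟩).1 (rs.get ⟨i, h2⟩).2) →
        KJudg E C (.obj members) (.patternProperties kvs) (rs.all (·.1))
          (patMatchedNames E members kvs)
    | ref {C J u f S' r σ} :
        E.get (E.load u) f = some S' →
        SJudg E (saturate C u) J S' r σ →
        KJudg E C J (.ref u f) r σ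
    | dynamicRefAsRef {C J u f S' r σ} :
        E.dget (E.load u) f = none →
        E.get (E.load u) f = some S' →
        SJudg E (saturate C u) J S' r σ →
        KJudg E C J (.dynamicRef u f) r σ
    | dynamicRef {C J u f v S' r σ} :
        (E.dget (E.load u) f).isSome →
        fstURI E (saturate C u) f = some v →
        E.dget (E.load v) f = some S' →
        SJudg E (saturate C v) J S' r σ →
        KJudg E C J (.dynamicRef u f) r σ

  /-- The keyword-list judgment `C, J ⊢L ⟨K1,…,Kn⟩ → (r, κ)`; keywords are
  evaluated left to right, and the four dependent keywords exploit the
  annotations accumulated by the preceding keywords. -/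
  inductive LJudg (E : Env) : Ctx → JVal → List Keyword → Bool → Finset Ann → Prop
    | nil {C J} : LJudg E C J [] true ∅
    | snocIndep {C J Ks K rl κl r κ} :
        K.isDependent = false →
        LJudg E C J Ks rl κl →
        KJudg E C J K r κ →
        LJudg E C J (Ks ++ [K]) (rl && r) (κl ∪ κ)
    | additionalPropertiesTriv {C J Ks S rl κl} :
        typeOf J ≠ .object →
        LJudg E C J Ks rl κl →
        LJudg E C J (Ks ++ [.additionalProperties S]) rl κl
    | additionalProperties {C members Ks S rl κl} (rs : List (Bool × Finset Ann)) :
        LJudg E C (.obj members) Ks rl κl →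
        rs.length = (unmatchedMembers E Ks members).length →
        (∀ i (h1 : i < (unmatchedMembers E Ks members).length) (h2 : i < rs.length),
          SJudg E C ((unmatchedMembers E Ks members).get ⟨i, h1⟩).2 S
            (rs.get ⟨i, h2⟩).1 (rs.get ⟨i, h2⟩).2) →
        LJudg E C (.obj members) (Ks ++ [.additionalProperties S])
          (rl && rs.all (·.1)) (objNames members)
    | unevaluatedPropertiesTriv {C J Ks S rl κl} :
        typeOf J ≠ .object →
        LJudg E C J Ks rl κl →
        LJudg E C J (Ks ++ [.unevaluatedProperties S]) rl κl
    | unevaluatedProperties {C members Ks S rl κl} (rs : List (Bool × Finset Ann)) :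
        LJudg E C (.obj members) Ks rl κl →
        rs.length = (unevalMembers members κl).length →
        (∀ i (h1 : i < (unevalMembers members κl).length) (h2 : i < rs.length),
          SJudg E C ((unevalMembers members κl).get ⟨i, h1⟩).2 S
            (rs.get ⟨i, h2⟩).1 (rs.get ⟨i, h2⟩).2) →
        LJudg E C (.obj members) (Ks ++ [.unevaluatedProperties S])
          (rl && rs.all (·.1)) (objNames members)
    | itemsTriv {C J Ks S rl κl} :
        typeOf J ≠ .array →
        LJudg E C J Ks rl κl →
        LJudg E C J (Ks ++ [.items S]) rl κl
    | items {C is Ks S rl κl} (rs : List (Bool × Finset Ann)) :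
        LJudg E C (.arr is) Ks rl κl →
        rs.length = is.length →
        (∀ i (h1 : i < is.length) (h2 : i < rs.length),
          SJudg E C (is.get ⟨i, h1⟩) S (rs.get ⟨i, h2⟩).1 (rs.get ⟨i, h2⟩).2) →
        LJudg E C (.arr is) (Ks ++ [.items S]) (rl && rs.all (·.1))
          (arrPositions is.length)
    | unevaluatedItemsTriv {C J Ks S rl κl} :
        typeOf J ≠ .array →
        LJudg E C J Ks rl κl →
        LJudg E C J (Ks ++ [.unevaluatedItems S]) rl κl
    | unevaluatedItems {C is Ks S rl κl} (rs : List (Bool × Finset Ann)) :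
        LJudg E C (.arr is) Ks rl κl →
        rs.length = (unevalIdx is κl).length →
        (∀ i (h1 : i < (unevalIdx is κl).length) (h2 : i < rs.length),
          SJudg E C ((unevalIdx is κl).get ⟨i, h1⟩) S
            (rs.get ⟨i, h2⟩).1 (rs.get ⟨i, h2⟩).2) →
        LJudg E C (.arr is) (Ks ++ [.unevaluatedItems S]) (rl && rs.all (·.1))
          (arrPositions is.length)
end

end MJS
namespace MJS

/-- `C ≡_d C'`: the two contexts resolve every dynamic anchor name `f ∈ d`
to the same first URI. -/
def EqD (E : Env) (d : Set String) (C C' : Ctx) : Prop :=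
  ∀ f ∈ d, fstURI E C f = fstURI E C' f

/- When `u ∈ C` already, `[u].find? p` can only succeed if `C.find? p` does, so the
`Option.or` absorbs it. -/
theorem find?_saturate (p : String → Bool) (C : Ctx) (u : String) :
    (saturate C u).find? p = (C.find? p).or ([u].find? p) := by
  unfold saturate
  split
  case isFalse => exact List.find?_append
  case isTrue hu =>
    cases hC : C.find? p with
    | some w => rfl
    | none =>
      have hpu : p u = false := by simpa using List.find?_eq_none.mp hC u hu
      simp [hpu]

theorem fstURI_saturate (E : Env) (C : Ctx) (u f : String) :
    fstURI E (saturate C u) f = (fstURI E C f).or (fstURI E [u] f) :=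
  find?_saturate _ C u

/-- d-equivalence of contexts is preserved by saturation. -/
theorem statement9 (E : Env) (d : Set String) (C C' : Ctx) (u : String)
    (h : EqD E d C C') : EqD E d (saturate C u) (saturate C' u) := by
  intro f hf
  rw [fstURI_saturate, fstURI_saturate, h f hf]

end MJS
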